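/- Let Ω ⊂ ℝⁿ be an open set with finite positive measure and let U ⊂ Ω with |U| > 0. If |Ω \ U|/|Ω| ≤ α(Ω)/4, then α(U) ≥ α(Ω)/2. -/

import Mathlib

open MeasureTheory Metric Set Filter
open scoped ENNReal NNReal Topology

noncomputable section

/-- Euclidean space `ℝⁿ`. -/
abbrev Eucl (n : ℕ) := EuclideanSpace ℝ (Fin n)

/-- `ω_n`, the Lebesgue measure of the unit ball of `ℝⁿ`. -/
def ballVol (n : ℕ) : ℝ := (volume (ball (0 : Eucl n) 1)).toReal

/-- The Fraenkel asymmetry of a set `Ω ⊆ ℝⁿ`: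
`α(Ω) = inf { |Ω Δ B_r(x)| / |B_r(x)| : |B_r(x)| = |Ω| }`. -/
def asym {n : ℕ} (Ω : Set (Eucl n)) : ℝ :=
  sInf {a : ℝ | ∃ (x : Eucl n) (r : ℝ), 0 < r ∧
    volume (ball x r) = volume Ω ∧
    a = (volume (symmDiff Ω (ball x r))).toReal / (volume (ball x r)).toReal}

/-- The distribution function `μ(t) = |{x ∈ Ω : |u x| > t}|` of `u` on `Ω`. -/
def distFun {n : ℕ} (Ω : Set (Eucl n)) (u : Eucl n → ℝ) (t : ℝ) : ℝ :=
  (volume {x ∈ Ω | t < |u x|}).toReal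

/-- The decreasing rearrangement `u*(s) = inf {t ≥ 0 : μ(t) < s}`. -/
def decRear {n : ℕ} (Ω : Set (Eucl n)) (u : Eucl n → ℝ) (s : ℝ) : ℝ :=
  sInf {t : ℝ | 0 ≤ t ∧ distFun Ω u t < s}

/-- The Schwarz rearrangement `u♯(x) = u*(ω_n |x|ⁿ)`. -/
def schwarz {n : ℕ} (Ω : Set (Eucl n)) (u : Eucl n → ℝ) (x : Eucl n) : ℝ :=
  decRear Ω u (ballVol n * ‖x‖ ^ n)

/-- Weak solution of the Robin Poisson problem `-Δu = f` in `Ω`,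
`∂u/∂ν + βu = 0` on `∂Ω`: for every test function `φ`,
`∫_Ω ∇u·∇φ + β ∫_{∂Ω} u φ dH^{n-1} = ∫_Ω f φ`. -/
def IsRobinSol {n : ℕ} (Ω : Set (Eucl n)) (β : ℝ) (f u : Eucl n → ℝ) : Prop :=
  ∀ φ : Eucl n → ℝ, ContDiff ℝ 1 φ →
    (∫ x in Ω, (inner ℝ (gradient u x) (gradient φ x) : ℝ))
      + β * ∫ x in frontier Ω, u x * φ x ∂(μH[(n : ℝ) - 1])
    = ∫ x in Ω, f x * φ x

/-- The Lorentz `L^{k,1}` norm: `‖u‖_{L^{k,1}} = ∫_0^∞ μ(t)^{1/k} dt`. -/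
def lorentzK1 {n : ℕ} (Ω : Set (Eucl n)) (u : Eucl n → ℝ) (k : ℝ) : ℝ :=
  ∫ t in Ioi (0 : ℝ), distFun Ω u t ^ ((1 : ℝ) / k)

/-- The square of the Lorentz `L^{2k,2}` norm:
`‖u‖²_{L^{2k,2}} = 2 ∫_0^∞ t μ(t)^{1/k} dt`. -/
def lorentz2K2sq {n : ℕ} (Ω : Set (Eucl n)) (u : Eucl n → ℝ) (k : ℝ) : ℝ :=
  2 * ∫ t in Ioi (0 : ℝ), t * distFun Ω u t ^ ((1 : ℝ) / k)

/-- The Laplacian `Δu(x) = ∑ᵢ ∂²u/∂xᵢ²`. -/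
def lapl {n : ℕ} (u : Eucl n → ℝ) (x : Eucl n) : ℝ :=
  ∑ i : Fin n, fderiv ℝ (fun y => fderiv ℝ u y (EuclideanSpace.single i 1)) x
    (EuclideanSpace.single i 1)

/-!
Fix a ball `B` with `|B| = |U|` and let `B'` be the concentric ball with `|B'| = |Ω|`. Then
`|B Δ B'| = |Ω| - |U| ≤ |Ω \ U|`, so the triangle inequality for symmetric differences gives
`α(Ω) |Ω| ≤ |Ω Δ B'| ≤ 2 |Ω \ U| + |U Δ B| ≤ α(Ω) |Ω| / 2 + |U Δ B|`,
i.e. `|U Δ B| / |U| ≥ α(Ω) |Ω| / (2 |U|) ≥ α(Ω) / 2`.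
-/

open scoped symmDiff

section AddHaarBall

variable {E : Type*} [NormedAddCommGroup E] [NormedSpace ℝ E] [MeasurableSpace E] [BorelSpace E]
  [FiniteDimensional ℝ E] [Nontrivial E] (μ : Measure E) [μ.IsAddHaarMeasure]

theorem exists_addHaar_ball_eq (x : E) {v : ℝ≥0∞} (hv₀ : v ≠ 0) (hv : v ≠ ∞) :
    ∃ r : ℝ, 0 < r ∧ μ (ball x r) = v := by
  set d := Module.finrank ℝ E
  set ω := μ (ball (0 : E) 1)
  have hω₀ : ω ≠ 0 := (measure_ball_pos μ _ one_pos).ne'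
  have hω : ω ≠ ∞ := measure_ball_lt_top.ne
  have hq : 0 < v.toReal / ω.toReal :=
    div_pos (ENNReal.toReal_pos hv₀ hv) (ENNReal.toReal_pos hω₀ hω)
  -- the volume of `ball x r` is `r ^ d * ω`, so `r := (v / ω) ^ (1 / d)` works
  refine ⟨(v.toReal / ω.toReal) ^ (1 / d : ℝ), by positivity, ?_⟩
  have hd : (d : ℝ) ≠ 0 := by exact_mod_cast Module.finrank_pos.ne'
  have hpow : ((v.toReal / ω.toReal) ^ (1 / d : ℝ)) ^ d = v.toReal / ω.toReal := by
    rw [← Real.rpow_natCast, ← Real.rpow_mul hq.le, one_div_mul_cancel hd, Real.rpow_one]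
  rw [Measure.addHaar_ball_of_pos μ x (by positivity), hpow, ENNReal.ofReal_div_of_pos
    (ENNReal.toReal_pos hω₀ hω), ENNReal.ofReal_toReal hv, ENNReal.ofReal_toReal hω,
    ENNReal.div_mul_cancel hω₀ hω]

end AddHaarBall

theorem measureReal_ball_symmDiff_ball {X : Type*} [PseudoMetricSpace X] [ProperSpace X]
    [MeasurableSpace X] [OpensMeasurableSpace X] (μ : Measure X) [IsFiniteMeasureOnCompacts μ]
    (x : X) {r s : ℝ} (h : μ.real (ball x r) ≤ μ.real (ball x s)) :
    μ.real (ball x r ∆ ball x s) = μ.real (ball x s) - μ.real (ball x r) := by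
  rcases le_total r s with hrs | hsr
  · have hsub := ball_subset_ball (x := x) hrs
    rw [symmDiff_of_le hsub, measureReal_sdiff hsub measurableSet_ball measure_ball_lt_top.ne]
  · have hsub := ball_subset_ball (x := x) hsr
    have heq : μ.real (ball x s) = μ.real (ball x r) :=
      le_antisymm (measureReal_mono hsub measure_ball_lt_top.ne) h
    rw [symmDiff_of_ge hsub, measureReal_sdiff hsub measurableSet_ball measure_ball_lt_top.ne,
      heq]

theorem measureReal_symmDiff_le_of_subset {α : Type*} [MeasurableSpace α] {μ : Measure α}
    {Ω U B B' : Set α} (hUΩ : U ⊆ Ω) (hΩ : μ Ω ≠ ∞) (hB : μ B ≠ ∞) :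
    μ.real (Ω ∆ B') ≤ μ.real (Ω \ U) + μ.real (U ∆ B) + μ.real (B ∆ B') := by
  have hU : μ U ≠ ∞ := measure_ne_top_of_subset hUΩ hΩ
  calc μ.real (Ω ∆ B') ≤ μ.real (Ω ∆ U) + μ.real (U ∆ B') := measureReal_symmDiff_le _ hΩ hU
    _ ≤ μ.real (Ω ∆ U) + (μ.real (U ∆ B) + μ.real (B ∆ B')) := by
      gcongr; exact measureReal_symmDiff_le _ hU hB
    _ = μ.real (Ω \ U) + μ.real (U ∆ B) + μ.real (B ∆ B') := by
      rw [symmDiff_of_ge hUΩ, add_assoc]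

section Asymmetry

variable {n : ℕ}

theorem asym_nonneg (Ω : Set (Eucl n)) : 0 ≤ asym Ω :=
  Real.sInf_nonneg fun _ ⟨_, _, _, _, ha⟩ => ha ▸ by positivity

theorem asym_le_of_ball {Ω : Set (Eucl n)} {x : Eucl n} {r : ℝ} (hr : 0 < r)
    (h : volume (ball x r) = volume Ω) :
    asym Ω ≤ volume.real (Ω ∆ ball x r) / volume.real Ω := by
  refine csInf_le ⟨0, fun _ ⟨_, _, _, _, ha⟩ => ha ▸ by positivity⟩ ⟨x, r, hr, h, ?_⟩
  simp only [measureReal_def, h]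

theorem le_asym_of_forall_ball [Nontrivial (Eucl n)] {Ω : Set (Eucl n)} (h₀ : volume Ω ≠ 0)
    (hfin : volume Ω ≠ ∞) {c : ℝ}
    (h : ∀ (x : Eucl n) (r : ℝ), 0 < r → volume (ball x r) = volume Ω →
      c * volume.real Ω ≤ volume.real (Ω ∆ ball x r)) :
    c ≤ asym Ω := by
  obtain ⟨r, hr, hball⟩ := exists_addHaar_ball_eq volume (0 : Eucl n) h₀ hfin
  refine le_csInf ⟨_, 0, r, hr, hball, rfl⟩ ?_
  rintro _ ⟨x, r, hr, hball, rfl⟩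
  rw [hball]
  exact (le_div_iff₀ (ENNReal.toReal_pos h₀ hfin)).2 (h x r hr hball)

theorem asym_mul_le_of_subset [Nontrivial (Eucl n)] {Ω U : Set (Eucl n)} (hUΩ : U ⊆ Ω)
    (h₀ : volume Ω ≠ 0) (hfin : volume Ω ≠ ∞) {x : Eucl n} {r : ℝ}
    (hball : volume (ball x r) = volume U) :
    asym Ω * volume.real Ω ≤ 2 * volume.real (Ω \ U) + volume.real (U ∆ ball x r) := by
  obtain ⟨r', hr', hball'⟩ := exists_addHaar_ball_eq volume x h₀ hfin
  have hasym : asym Ω * volume.real Ω ≤ volume.real (Ω ∆ ball x r') :=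
    (le_div_iff₀ (ENNReal.toReal_pos h₀ hfin)).1 (asym_le_of_ball hr' hball')
  have hBB' : volume.real (ball x r ∆ ball x r') ≤ volume.real (Ω \ U) := by
    have hvol : volume.real (ball x r) = volume.real U := congrArg ENNReal.toReal hball
    have hvol' : volume.real (ball x r') = volume.real Ω := congrArg ENNReal.toReal hball'
    have hle : volume.real (ball x r) ≤ volume.real (ball x r') := by
      rw [hvol, hvol']; exact measureReal_mono hUΩ hfin
    rw [measureReal_ball_symmDiff_ball volume x hle, hvol, hvol']
    exact le_measureReal_sdiff (measure_ne_top_of_subset hUΩ hfin)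
  have htriangle := measureReal_symmDiff_le_of_subset (B := ball x r) (B' := ball x r') hUΩ hfin
    measure_ball_lt_top.ne
  linarith

end Asymmetry

theorem asym_propagation_general (n : ℕ) (hn : 1 ≤ n) (Ω U : Set (Eucl n))
    (hfin : volume Ω < ⊤)
    (hUΩ : U ⊆ Ω) (hUpos : 0 < volume U)
    (hcond : (volume (Ω \ U)).toReal / (volume Ω).toReal ≤ asym Ω / 4) :
    asym Ω / 2 ≤ asym U := by
  have : Nonempty (Fin n) := ⟨⟨0, hn⟩⟩
  have hUΩ' : volume U ≤ volume Ω := measure_mono hUΩ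
  have hΩ₀ : volume Ω ≠ 0 := (hUpos.trans_le hUΩ').ne'
  have hUfin : volume U ≠ ∞ := (hUΩ'.trans_lt hfin).ne
  have hΩpos : 0 < volume.real Ω := ENNReal.toReal_pos hΩ₀ hfin.ne
  have hUΩreal : volume.real U ≤ volume.real Ω := measureReal_mono hUΩ hfin.ne
  have hdiff : volume.real (Ω \ U) ≤ asym Ω / 4 * volume.real Ω :=
    (div_le_iff₀ hΩpos).mp hcond
  have hmono : asym Ω * volume.real U ≤ asym Ω * volume.real Ω :=
    mul_le_mul_of_nonneg_left hUΩreal (asym_nonneg Ω)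
  refine le_asym_of_forall_ball hUpos.ne' hUfin fun x r _ hball => ?_
  have hkey := asym_mul_le_of_subset hUΩ hΩ₀ hfin.ne hball
  linarith

/-- Propagation of asymmetry: if `Ω` is open with finite positive measure,
`U ⊆ Ω` has positive measure and `|Ω \ U|/|Ω| ≤ α(Ω)/4`, then `α(U) ≥ α(Ω)/2`. -/
theorem asym_propagation (n : ℕ) (hn : 1 ≤ n) (Ω U : Set (Eucl n))
    (hΩo : IsOpen Ω) (hfin : volume Ω < ⊤) (hU : MeasurableSet U)
    (hUΩ : U ⊆ Ω) (hUpos : 0 < volume U)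
    (hcond : (volume (Ω \ U)).toReal / (volume Ω).toReal ≤ asym Ω / 4) :
    asym Ω / 2 ≤ asym U :=
  asym_propagation_general n hn Ω U hfin hUΩ hUpos hcond
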